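/- arXiv:2012.09002 — 3 statements merged into one kernel-verified Lean document; each statement's English description precedes it below -/
import Mathlib

section
/- (Classical module-theoretic specialization of the Bazzoni characterization) Let R be a ring and T a right R-module with projective dimension at most 1. Then T is a 1-tilting module (i.e., pd T ≤ 1, Ext^1_R(T, T^{(λ)}) = 0 for every cardinal λ, and there is an exact sequence 0 → R → T₀ → T₁ → 0 with T₀, T₁ ∈ Add T) if and only if Gen₁(T) := {M : there is an epimorphism T^{(λ)} → M whose kernel lies in Gen(T)} equals T^⊥ := {M : Ext^1_R(T,M) = 0}; equivalently T is 1-tilting if and only if T^⊥ = Pres(T), the class of modules admitting an exact sequence T^{(λ)} → T^{(μ)} → M → 0. -/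
/-!
Fix a projective resolution `0 → P₁ → P₀ → T → 0`. Then `Ext¹(T, M) = 0` exactly when every map
`P₁ → M` extends to `P₀`, and since `P₁` is projective, `T^⊥` is closed under epimorphic images:
`Pres T ⊆ Gen T ⊆ T^⊥` as soon as `T^{(λ)} ∈ T^⊥`. If `T` is tilting, then `Ext¹(T₁, M) = 0` lets
every map `R → M` extend along `R → T₀`, so each `M ∈ T^⊥` is generated by `T`; the kernel of the
trace map `T^{(Hom(T, M))} → M` is again in `T^⊥`, hence `M ∈ Pres T`. Conversely, if
`T^⊥ = Pres T`, Bongartz's universal extension `0 → R → T₀ → T^{(Λ)} → 0` has `T₀ ∈ T^⊥ ⊆ Gen T`,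
and the trace map onto `T₀` splits because its kernel lies in `T^⊥` while `T₀` is an extension of
`T^{(Λ)}` by the projective module `R`; thus `T₀ ∈ Add T`.
-/

open CategoryTheory

variable (R : Type) [Ring R]

/-- `Ext¹_R(T, M) = 0`: every short exact sequence `0 → M → B → T → 0` splits. -/
def Ext1Zero (T M : ModuleCat R) : Prop :=
  ∀ (B : ModuleCat R) (i : M ⟶ B) (p : B ⟶ T),
    Function.Injective i → Function.Surjective p →
    LinearMap.range i.hom = LinearMap.ker p.hom →
    ∃ s : T ⟶ B, s ≫ p = 𝟙 T

/-- `M ∈ Add T`: `M` is a direct summand of a direct sum of copies of `T`. -/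
def InAddM (T M : ModuleCat R) : Prop :=
  ∃ (ι : Type) (i : M ⟶ ModuleCat.of R (ι →₀ T)) (r : ModuleCat.of R (ι →₀ T) ⟶ M),
    i ≫ r = 𝟙 M

/-- `M ∈ Gen(T)`: `M` is an epimorphic image of a direct sum of copies of `T`. -/
def GenM (T M : ModuleCat R) : Prop :=
  ∃ (ι : Type) (f : ModuleCat.of R (ι →₀ T) ⟶ M), Function.Surjective f

/-- `M ∈ Pres(T) = Gen₁(T)`: there is an epimorphism `T^{(ι)} → M` whose kernel lies
in `Gen(T)`; equivalently `M` has a presentation `T^{(λ)} → T^{(μ)} → M → 0`. -/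
def PresM (T M : ModuleCat R) : Prop :=
  ∃ (ι : Type) (f : ModuleCat.of R (ι →₀ T) ⟶ M),
    Function.Surjective f ∧ GenM R T (ModuleCat.of R (LinearMap.ker f.hom))

/-- `pd T ≤ 1`: `T` admits a projective resolution `0 → P₁ → P₀ → T → 0`. -/
def PdLeOneM (T : ModuleCat R) : Prop :=
  ∃ (P₁ P₀ : ModuleCat R) (i : P₁ ⟶ P₀) (p : P₀ ⟶ T),
    Projective P₁ ∧ Projective P₀ ∧
    Function.Injective i ∧ Function.Surjective p ∧
    LinearMap.range i.hom = LinearMap.ker p.hom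

/-- `T` is a 1-tilting module: `pd T ≤ 1`, `Ext¹(T, T^{(λ)}) = 0` for every cardinal
`λ`, and there is an exact sequence `0 → R → T₀ → T₁ → 0` with `T₀, T₁ ∈ Add T`. -/
def IsTiltingM (T : ModuleCat R) : Prop :=
  PdLeOneM R T ∧
  (∀ ι : Type, Ext1Zero R T (ModuleCat.of R (ι →₀ T))) ∧
  ∃ (T₀ T₁ : ModuleCat R) (i : ModuleCat.of R R ⟶ T₀) (p : T₀ ⟶ T₁),
    Function.Injective i ∧ Function.Surjective p ∧
    LinearMap.range i.hom = LinearMap.ker p.hom ∧ InAddM R T T₀ ∧ InAddM R T T₁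

open Function (Injective Surjective Exact)
open LinearMap

variable {R}

section LinearAlgebra

variable {A B C : Type*} [AddCommGroup A] [Module R A] [AddCommGroup B] [Module R B]
  [AddCommGroup C] [Module R C]

theorem Function.Exact.exists_desc {i : A →ₗ[R] B} {p : B →ₗ[R] C} (hip : Exact i p)
    (hp : Surjective p) {D : Type*} [AddCommGroup D] [Module R D] {f : B →ₗ[R] D}
    (hf : f ∘ₗ i = 0) : ∃ g : C →ₗ[R] D, g ∘ₗ p = f :=
  ⟨(range i).liftQ f (range_le_ker_iff.2 hf) ∘ₗ (hip.linearEquivOfSurjective hp).symm, by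
    ext b
    simp⟩

theorem Function.Exact.exists_lift {k : A →ₗ[R] B} {q : B →ₗ[R] C} (hkq : Exact k q)
    (hk : Injective k) {D : Type*} [AddCommGroup D] [Module R D] {f : D →ₗ[R] B}
    (hf : q ∘ₗ f = 0) : ∃ g : D →ₗ[R] A, k ∘ₗ g = f := by
  have hf' : range f ≤ range k := hkq.linearMap_ker_eq ▸ range_le_ker_iff.2 hf
  refine ⟨(LinearEquiv.ofInjective k hk).symm ∘ₗ f.codRestrict _ fun d => hf' ⟨d, rfl⟩, ?_⟩
  ext d
  simp

theorem Function.Exact.finsupp_mapRange {ι : Type*} {i : A →ₗ[R] B} {p : B →ₗ[R] C}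
    (hip : Exact i p) :
    Exact (Finsupp.mapRange.linearMap i : (ι →₀ A) →ₗ[R] ι →₀ B)
      (Finsupp.mapRange.linearMap p) := by
  refine exact_of_comp_eq_zero_of_ker_le_range ?_ fun w hw => ?_
  · ext a x
    simp [hip.apply_apply_eq_zero]
  · rw [← w.sum_single]
    refine Submodule.finsuppSum_mem _ _ _ _ fun a _ => ?_
    obtain ⟨x, hx⟩ := (hip (w a)).1 (by simpa using DFunLike.congr_fun hw a)
    exact ⟨Finsupp.single a x, by simp [hx]⟩

end LinearAlgebra

section PushoutPullback

variable {A B C Z : Type} [AddCommGroup A] [Module R A] [AddCommGroup B] [Module R B]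
  [AddCommGroup C] [Module R C] [AddCommGroup Z] [Module R Z]

theorem exists_pushout {u : A →ₗ[R] B} {v : B →ₗ[R] Z} (hu : Injective u) (hv : Surjective v)
    (huv : Exact u v) (f : A →ₗ[R] C) :
    ∃ (D : ModuleCat.{0} R) (j : C →ₗ[R] D) (g : B →ₗ[R] D) (q : D →ₗ[R] Z),
      Injective j ∧ Surjective q ∧ Exact j q ∧ g ∘ₗ u = j ∘ₗ f := by
  set N := range (f.prod (-u))
  have hN : N ≤ ker (v ∘ₗ snd R C B) := by
    rintro _ ⟨a, rfl⟩
    simp [huv.apply_apply_eq_zero]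
  refine ⟨.of R ((C × B) ⧸ N), N.mkQ ∘ₗ inl R C B, N.mkQ ∘ₗ inr R C B, N.liftQ _ hN,
    ?_, ?_, ?_, ?_⟩
  · refine (injective_iff_map_eq_zero _).2 fun c hc => ?_
    obtain ⟨a, ha⟩ := (Submodule.Quotient.mk_eq_zero N).1 hc
    simp only [LinearMap.prod_apply, LinearMap.coe_neg, Function.prod_apply, Pi.neg_apply, coe_inl,
      Prod.mk.injEq, neg_eq_zero] at ha
    rw [← ha.1, hu (ha.2.trans (map_zero u).symm), map_zero]
  · intro z
    obtain ⟨b, rfl⟩ := hv z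
    exact ⟨N.mkQ (0, b), rfl⟩
  · intro x
    obtain ⟨⟨c, b⟩, rfl⟩ := N.mkQ_surjective x
    refine ⟨fun hb => ?_, ?_⟩
    · obtain ⟨a, rfl⟩ := (huv b).1 hb
      exact ⟨c + f a, (Submodule.Quotient.eq N).2 ⟨a, by simp⟩⟩
    · rintro ⟨c', hc'⟩
      rw [← hc']
      simp
  · ext a
    exact (Submodule.Quotient.eq N).2 ⟨-a, by simp⟩

theorem exists_pullback {i : A →ₗ[R] B} {p : B →ₗ[R] Z} (hi : Injective i) (hp : Surjective p)
    (hip : Exact i p) (f : C →ₗ[R] Z) :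
    ∃ (E : ModuleCat.{0} R) (j : A →ₗ[R] E) (q : E →ₗ[R] C) (g : E →ₗ[R] B),
      Injective j ∧ Surjective q ∧ Exact j q ∧ p ∘ₗ g = f ∘ₗ q := by
  set E := ker (f ∘ₗ fst R C B - p ∘ₗ snd R C B)
  have hE : ∀ {c b}, (c, b) ∈ E ↔ f c = p b := by simp [E, sub_eq_zero]
  have hiE : ∀ a, ((0 : C), i a) ∈ E := fun a => hE.2 (by simp [hip.apply_apply_eq_zero])
  refine ⟨.of R E, (inr R C B ∘ₗ i).codRestrict E hiE, fst R C B ∘ₗ E.subtype,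
    snd R C B ∘ₗ E.subtype, ?_, ?_, ?_, ?_⟩
  · exact fun a a' h => hi (congrArg (fun e : E => (e : C × B).2) h)
  · intro c
    obtain ⟨b, hb⟩ := hp (f c)
    exact ⟨⟨(c, b), hE.2 hb.symm⟩, rfl⟩
  · rintro ⟨⟨c, b⟩, he⟩
    refine ⟨fun hc => ?_, ?_⟩
    · change c = 0 at hc
      subst hc
      obtain ⟨a, rfl⟩ := (hip b).1 (by simpa using (hE.1 he).symm)
      exact ⟨a, rfl⟩
    · rintro ⟨a, ha⟩
      rw [← ha]
      rfl
  · ext ⟨⟨c, b⟩, he⟩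
    exact (hE.1 he).symm

end PushoutPullback

section Ext1Zero

variable {T X Y M : ModuleCat.{0} R}

theorem ext1Zero_iff : Ext1Zero R X M ↔
    ∀ (B : Type) [AddCommGroup B] [Module R B] (i : M →ₗ[R] B) (p : B →ₗ[R] X),
      Injective i → Surjective p → Exact i p → ∃ s : X →ₗ[R] B, p ∘ₗ s = .id := by
  refine ⟨fun h B _ _ i p hi hp hip => ?_, fun h B i p hi hp hip => ?_⟩
  · obtain ⟨s, hs⟩ := h (.of R B) (ModuleCat.ofHom i) (ModuleCat.ofHom p) hi hp
      hip.linearMap_ker_eq.symm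
    exact ⟨s.hom, congrArg ModuleCat.Hom.hom hs⟩
  · obtain ⟨s, hs⟩ := h B i.hom p.hom hi hp (exact_iff.2 hip.symm)
    exact ⟨ModuleCat.ofHom s, ModuleCat.hom_ext hs⟩

namespace Ext1Zero

variable {B : Type} [AddCommGroup B] [Module R B] {i : M →ₗ[R] B}

theorem exists_section (h : Ext1Zero R X M) {p : B →ₗ[R] X} (hi : Injective i)
    (hp : Surjective p) (hip : Exact i p) : ∃ s : X →ₗ[R] B, p ∘ₗ s = .id :=
  ext1Zero_iff.1 h B i p hi hp hip

theorem exists_retraction (h : Ext1Zero R X M) {p : B →ₗ[R] X} (hi : Injective i)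
    (hp : Surjective p) (hip : Exact i p) : ∃ r : B →ₗ[R] M, r ∘ₗ i = .id :=
  ((hip.split_tfae hi hp).out 0 1).1 (h.exists_section hi hp hip)

theorem exists_extend (h : Ext1Zero R X M) {A : Type} [AddCommGroup A] [Module R A]
    {u : A →ₗ[R] B} {v : B →ₗ[R] X} (hu : Injective u) (hv : Surjective v) (huv : Exact u v)
    (f : A →ₗ[R] M) : ∃ g : B →ₗ[R] M, g ∘ₗ u = f := by
  obtain ⟨D, j, g, q, hj, hq, hjq, hgu⟩ := exists_pushout hu hv huv f
  obtain ⟨r, hr⟩ := h.exists_retraction hj hq hjq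
  exact ⟨r ∘ₗ g, by rw [comp_assoc, hgu, ← comp_assoc, hr, id_comp]⟩

theorem exists_lift (h : Ext1Zero R X M) {Z : Type} [AddCommGroup Z] [Module R Z]
    {p : B →ₗ[R] Z} (hi : Injective i) (hp : Surjective p) (hip : Exact i p) (f : X →ₗ[R] Z) :
    ∃ g : X →ₗ[R] B, p ∘ₗ g = f := by
  obtain ⟨E, j, q, g, hj, hq, hjq, hpg⟩ := exists_pullback hi hp hip f
  obtain ⟨s, hs⟩ := h.exists_section hj hq hjq
  exact ⟨g ∘ₗ s, by rw [← comp_assoc, hpg, comp_assoc, hs, comp_id]⟩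

theorem of_inAddM (h : Ext1Zero R T M) (hY : InAddM R T Y) : Ext1Zero R Y M := by
  obtain ⟨κ, e, r, her⟩ := hY
  rw [ext1Zero_iff]
  intro B _ _ i p hi hp hip
  choose s hs using fun k => h.exists_lift hi hp hip (r.hom ∘ₗ Finsupp.lsingle k)
  have hsr : p ∘ₗ Finsupp.lsum ℕ s = r.hom :=
    Finsupp.lhom_ext' fun k => by rw [comp_assoc, Finsupp.lsum_comp_lsingle, hs]
  exact ⟨Finsupp.lsum ℕ s ∘ₗ e.hom, by
    rw [← comp_assoc, hsr]
    exact congrArg ModuleCat.Hom.hom her⟩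

theorem of_extension {A' A'' : ModuleCat.{0} R} (hA' : Ext1Zero R A' M)
    (hA'' : Ext1Zero R A'' M) {j : A' →ₗ[R] X} {q : X →ₗ[R] A''} (hj : Injective j)
    (hq : Surjective q) (hjq : Exact j q) : Ext1Zero R X M := by
  rw [ext1Zero_iff]
  intro B _ _ i p hi hp hip
  obtain ⟨s, hs⟩ := hA'.exists_lift hi hp hip j
  have hps : ∀ a, p (s a) = j a := LinearMap.congr_fun hs
  -- `B` is an extension of `A''` by `M × A'`
  have hinj : Injective (i.coprod s) := by
    refine (injective_iff_map_eq_zero _).2 fun ⟨m, a⟩ hma => ?_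
    have ha : a = 0 := hj <| by
      simpa [hps, hip.apply_apply_eq_zero] using congrArg p hma
    subst ha
    simpa using hi (by simpa using hma : i m = i 0)
  have hexact : Exact (i.coprod s) (q ∘ₗ p) := by
    intro b
    refine ⟨fun hb => ?_, ?_⟩
    · obtain ⟨a, ha⟩ := (hjq (p b)).1 hb
      obtain ⟨m, hm⟩ := (hip (b - s a)).1 (by rw [map_sub, hps, ha, sub_self])
      exact ⟨(m, a), by simp [hm]⟩
    · rintro ⟨⟨m, a⟩, rfl⟩
      simp [hps, hip.apply_apply_eq_zero, hjq.apply_apply_eq_zero]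
  obtain ⟨ρ, hρ⟩ := hA''.exists_extend hinj (hq.comp hp) hexact (fst R M A')
  have hρi : ρ ∘ₗ i = .id := by rw [← coprod_inl i s, ← comp_assoc, hρ]; rfl
  have hsplit := (hip.split_tfae hi hp).out 0 1
  exact hsplit.2 ⟨ρ, hρi⟩

end Ext1Zero

theorem ext1Zero_of_projective [Module.Projective R X] : Ext1Zero R X M := by
  rw [ext1Zero_iff]
  intro B _ _ i p _ hp _
  exact Module.projective_lifting_property p .id hp

end Ext1Zero

section Trace

variable (R) in
noncomputable def traceMap (T M : Type*) [AddCommGroup T] [Module R T] [AddCommGroup M]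
    [Module R M] : ((T →ₗ[R] M) →₀ T) →ₗ[R] M :=
  Finsupp.lsum ℕ fun f => f

variable {T M : Type*} [AddCommGroup T] [Module R T] [AddCommGroup M] [Module R M]

theorem traceMap_comp_lsingle (f : T →ₗ[R] M) : traceMap R T M ∘ₗ Finsupp.lsingle f = f :=
  Finsupp.lsum_comp_lsingle ..

theorem range_le_range_traceMap {ι : Type*} (f : (ι →₀ T) →ₗ[R] M) :
    range f ≤ range (traceMap R T M) := by
  have hf : traceMap R T M ∘ₗ Finsupp.lmapDomain T R (fun a => f ∘ₗ Finsupp.lsingle a) = f :=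
    Finsupp.lhom_ext' fun a => by ext; simp [traceMap]
  rw [← hf]
  exact range_comp_le_range _ _

end Trace

section Generation

variable {T M : ModuleCat.{0} R}

theorem genM_iff_surjective_traceMap : GenM R T M ↔ Surjective (traceMap R T M) := by
  refine ⟨fun ⟨ι, f, hf⟩ m => ?_, fun h => ⟨_, ModuleCat.ofHom (traceMap R T M), h⟩⟩
  obtain ⟨x, rfl⟩ := hf m
  exact range_le_range_traceMap f.hom ⟨x, rfl⟩

theorem genM_of_ext1Zero {T₀ T₁ : ModuleCat.{0} R} {j : R →ₗ[R] T₀} {q : T₀ →ₗ[R] T₁}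
    (hj : Injective j) (hq : Surjective q) (hjq : Exact j q) (hT₀ : InAddM R T T₀)
    (hT₁ : InAddM R T T₁) (hM : Ext1Zero R T M) : GenM R T M := by
  obtain ⟨κ, e, r, her⟩ := hT₀
  rw [genM_iff_surjective_traceMap]
  intro m
  obtain ⟨g, hg⟩ := (hM.of_inAddM hT₁).exists_extend hj hq hjq (toSpanSingleton R M m)
  refine range_le_range_traceMap (g ∘ₗ r.hom) ⟨e.hom (j 1), ?_⟩
  have her' : r.hom (e.hom (j 1)) = j 1 := LinearMap.congr_fun (congrArg ModuleCat.Hom.hom her) _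
  rw [LinearMap.comp_apply, her', ← LinearMap.comp_apply, hg, toSpanSingleton_apply_one]

theorem inAddM_finsupp (T : ModuleCat.{0} R) (ι : Type) :
    InAddM R T (ModuleCat.of R (ι →₀ T)) :=
  ⟨ι, 𝟙 _, 𝟙 _, Category.id_comp _⟩

theorem inAddM_of_ext1Zero_ker_traceMap {X : ModuleCat.{0} R} (hX : GenM R T X)
    (h : Ext1Zero R X (ModuleCat.of R (ker (traceMap R T X)))) : InAddM R T X := by
  obtain ⟨s, hs⟩ := h.exists_section (ker _).injective_subtype
    (genM_iff_surjective_traceMap.1 hX) (exact_subtype_ker_map _)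
  exact ⟨_, ModuleCat.ofHom s, ModuleCat.ofHom (traceMap R T X), ModuleCat.hom_ext hs⟩

theorem presM_finsupp (T : ModuleCat.{0} R) (ι : Type) :
    PresM R T (ModuleCat.of R (ι →₀ T)) :=
  ⟨ι, 𝟙 _, fun y => ⟨y, rfl⟩, Empty, 0, fun ⟨_, hy⟩ => ⟨0, Subtype.ext hy.symm⟩⟩

end Generation

section Presentation

variable {P₁ P₀ : Type} [AddCommGroup P₁] [Module R P₁] [AddCommGroup P₀] [Module R P₀]
  {T M : ModuleCat.{0} R} {i : P₁ →ₗ[R] P₀} {p : P₀ →ₗ[R] T}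

theorem ext1Zero_of_forall_extend [Module.Projective R P₀] (hp : Surjective p) (hip : Exact i p)
    (H : ∀ φ : P₁ →ₗ[R] M, ∃ ψ : P₀ →ₗ[R] M, ψ ∘ₗ i = φ) : Ext1Zero R T M := by
  rw [ext1Zero_iff]
  intro B _ _ k q hk hq hkq
  obtain ⟨p', hp'⟩ := Module.projective_lifting_property q p hq
  obtain ⟨φ, hφ⟩ := hkq.exists_lift hk (f := p' ∘ₗ i) <| by
    rw [← comp_assoc, hp', hip.linearMap_comp_eq_zero]
  obtain ⟨ψ, hψ⟩ := H φ
  obtain ⟨s, hs⟩ := hip.exists_desc hp (f := p' - k ∘ₗ ψ) <| by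
    rw [sub_comp, comp_assoc, hψ, hφ, sub_self]
  refine ⟨s, (cancel_right hp).1 ?_⟩
  rw [comp_assoc, hs, comp_sub, hp', ← comp_assoc, hkq.linearMap_comp_eq_zero, zero_comp,
    sub_zero, id_comp]

namespace Ext1Zero

theorem of_surjective [Module.Projective R P₁] [Module.Projective R P₀] (hi : Injective i)
    (hp : Surjective p) (hip : Exact i p) {N : ModuleCat.{0} R} (h : Ext1Zero R T N)
    {g : N →ₗ[R] M} (hg : Surjective g) : Ext1Zero R T M :=
  ext1Zero_of_forall_extend hp hip fun φ => by
    obtain ⟨φ', hφ'⟩ := Module.projective_lifting_property g φ hg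
    obtain ⟨ψ, hψ⟩ := h.exists_extend hi hp hip φ'
    exact ⟨g ∘ₗ ψ, by rw [comp_assoc, hψ, hφ']⟩

theorem of_exact [Module.Projective R P₀] (hi : Injective i) (hp : Surjective p)
    (hip : Exact i p) {K N : ModuleCat.{0} R} {Q : Type} [AddCommGroup Q] [Module R Q]
    (h : Ext1Zero R T N) {k : K →ₗ[R] N} {g : N →ₗ[R] Q} (hk : Injective k) (hkg : Exact k g)
    (hlift : ∀ f : T →ₗ[R] Q, ∃ f' : T →ₗ[R] N, g ∘ₗ f' = f) : Ext1Zero R T K :=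
  ext1Zero_of_forall_extend hp hip fun φ => by
    obtain ⟨ψ₀, hψ₀⟩ := h.exists_extend hi hp hip (k ∘ₗ φ)
    obtain ⟨f, hf⟩ := hip.exists_desc hp (f := g ∘ₗ ψ₀) <| by
      rw [comp_assoc, hψ₀, ← comp_assoc, hkg.linearMap_comp_eq_zero, zero_comp]
    obtain ⟨f', hf'⟩ := hlift f
    obtain ⟨ψ, hψ⟩ := hkg.exists_lift hk (f := ψ₀ - f' ∘ₗ p) <| by
      rw [comp_sub, ← comp_assoc, hf', hf, sub_self]
    refine ⟨ψ, (cancel_left hk).1 ?_⟩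
    rw [← comp_assoc, hψ, sub_comp, hψ₀, comp_assoc, hip.linearMap_comp_eq_zero, comp_zero,
      sub_zero]

theorem of_exact_of_forall_extend [Module.Projective R P₀] (hi : Injective i)
    (hp : Surjective p) (hip : Exact i p) {C : Type} [AddCommGroup C] [Module R C]
    {D Z : ModuleCat.{0} R} (h : Ext1Zero R T Z) {j : C →ₗ[R] D} {q : D →ₗ[R] Z}
    (hj : Injective j) (hq : Surjective q) (hjq : Exact j q)
    (H : ∀ c : P₁ →ₗ[R] C, ∃ ψ : P₀ →ₗ[R] D, ψ ∘ₗ i = j ∘ₗ c) : Ext1Zero R T D :=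
  ext1Zero_of_forall_extend hp hip fun φ => by
    obtain ⟨ψ₁, hψ₁⟩ := h.exists_extend hi hp hip (q ∘ₗ φ)
    obtain ⟨ψ₂, hψ₂⟩ := Module.projective_lifting_property q ψ₁ hq
    obtain ⟨c, hc⟩ := hjq.exists_lift hj (f := φ - ψ₂ ∘ₗ i) <| by
      rw [comp_sub, ← comp_assoc, hψ₂, hψ₁, sub_self]
    obtain ⟨ψ₃, hψ₃⟩ := H c
    exact ⟨ψ₂ + ψ₃, by rw [add_comp, hψ₃, hc, add_sub_cancel]⟩

theorem ker_traceMap [Module.Projective R P₀] (hi : Injective i) (hp : Surjective p)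
    (hip : Exact i p) {M : ModuleCat.{0} R}
    (h : Ext1Zero R T (ModuleCat.of R ((T →ₗ[R] M) →₀ T))) :
    Ext1Zero R T (ModuleCat.of R (ker (traceMap R T M))) :=
  h.of_exact hi hp hip (ker _).injective_subtype (exact_subtype_ker_map _)
    fun f => ⟨Finsupp.lsingle f, traceMap_comp_lsingle f⟩

end Ext1Zero

/-- Bongartz's universal extension: push the presentation of `T^{(Λ)}`, `Λ = Hom(P₁, R)`, out
along the sum of all `c : P₁ → R`, so that every such `c` extends to `P₀` in the pushout. -/
theorem exists_universal_extension [Module.Projective R P₀] (hi : Injective i)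
    (hp : Surjective p) (hip : Exact i p)
    (h : Ext1Zero R T (ModuleCat.of R ((P₁ →ₗ[R] R) →₀ T))) :
    ∃ (T₀ : ModuleCat.{0} R) (j : R →ₗ[R] T₀) (q : T₀ →ₗ[R] (P₁ →ₗ[R] R) →₀ T),
      Injective j ∧ Surjective q ∧ Exact j q ∧ Ext1Zero R T T₀ := by
  obtain ⟨T₀, j, g, q, hj, hq, hjq, hg⟩ := exists_pushout
    (u := Finsupp.mapRange.linearMap i) (v := Finsupp.mapRange.linearMap p)
    (Finsupp.mapRange_injective _ (map_zero i) hi) (Finsupp.mapRange_surjective _ (map_zero p) hp)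
    hip.finsupp_mapRange (Finsupp.lsum ℕ fun c : P₁ →ₗ[R] R => c)
  refine ⟨T₀, j, q, hj, hq, hjq, h.of_exact_of_forall_extend hi hp hip hj hq hjq fun c =>
    ⟨g ∘ₗ Finsupp.lsingle c, ?_⟩⟩
  calc g ∘ₗ Finsupp.lsingle c ∘ₗ i = g ∘ₗ Finsupp.mapRange.linearMap i ∘ₗ Finsupp.lsingle c := by
        ext; simp
    _ = j ∘ₗ c := by rw [← comp_assoc, hg, comp_assoc, Finsupp.lsum_comp_lsingle]

theorem exists_tilting_sequence [Module.Projective R P₀] (hi : Injective i) (hp : Surjective p)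
    (hip : Exact i p) (hsum : ∀ ι : Type, Ext1Zero R T (ModuleCat.of R (ι →₀ T)))
    (hgen : ∀ M : ModuleCat.{0} R, Ext1Zero R T M → GenM R T M) :
    ∃ (T₀ T₁ : ModuleCat.{0} R) (j : ModuleCat.of R R ⟶ T₀) (q : T₀ ⟶ T₁),
      Injective j ∧ Surjective q ∧ range j.hom = ker q.hom ∧ InAddM R T T₀ ∧ InAddM R T T₁ := by
  obtain ⟨T₀, j, q, hj, hq, hjq, hT₀⟩ := exists_universal_extension hi hp hip (hsum _)
  have hK := (hsum _).ker_traceMap hi hp hip (M := T₀)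
  have hsplit := (ext1Zero_of_projective (X := .of R R)).of_extension
    (hK.of_inAddM (inAddM_finsupp T _)) hj hq hjq
  exact ⟨T₀, _, ModuleCat.ofHom j, ModuleCat.ofHom q, hj, hq, hjq.linearMap_ker_eq.symm,
    inAddM_of_ext1Zero_ker_traceMap (hgen T₀ hT₀) hsplit, inAddM_finsupp T _⟩

end Presentation

/-- Bazzoni: a module `T` of projective dimension at most `1` is
1-tilting iff `T^⊥ = Pres(T) = Gen₁(T)`. -/
theorem stmt14 (T : ModuleCat R) (hpd : PdLeOneM R T) :
    IsTiltingM R T ↔ (∀ M : ModuleCat R, Ext1Zero R T M ↔ PresM R T M) := by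
  obtain ⟨P₁, P₀, i, p, hP₁, hP₀, hi, hp, hip⟩ := id hpd
  have : Module.Projective R P₁ := (IsProjective.iff_projective P₁).2 hP₁
  have : Module.Projective R P₀ := (IsProjective.iff_projective P₀).2 hP₀
  replace hip : Exact i.hom p.hom := exact_iff.2 hip.symm
  constructor
  · rintro ⟨-, hsum, T₀, T₁, j, q, hj, hq, hjq, hT₀, hT₁⟩ M
    have hgen {N : ModuleCat R} (hN : Ext1Zero R T N) : GenM R T N :=
      genM_of_ext1Zero hj hq (exact_iff.2 hjq.symm) hT₀ hT₁ hN
    refine ⟨fun hM => ⟨_, ModuleCat.ofHom (traceMap R T M),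
      genM_iff_surjective_traceMap.1 (hgen hM), hgen ((hsum _).ker_traceMap hi hp hip)⟩, ?_⟩
    rintro ⟨ι, f, hf, -⟩
    exact (hsum ι).of_surjective hi hp hip hf
  · intro hperp
    have hsum (ι : Type) : Ext1Zero R T (.of R (ι →₀ T)) := (hperp _).2 (presM_finsupp T ι)
    refine ⟨hpd, hsum, exists_tilting_sequence hi hp hip hsum fun M hM => ?_⟩
    obtain ⟨ι, f, hf, -⟩ := (hperp M).1 hM
    exact ⟨ι, f, hf⟩
end

section
/- Let R be a ring and T a 1-tilting right R-module. For every M in Pres(T) there exists a short exact sequence 0 → K → T₀ → M → 0 with T₀ ∈ Add T and K ∈ Pres(T). -/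
open CategoryTheory

variable (R : Type) [Ring R]

/-!
The given presentation `T^(ι) → M` has kernel in `Gen(T)`, so it suffices that
`Gen(T) ⊆ Pres(T)` for tilting `T`. For `N ∈ Gen(T)`, the kernel `K` of the evaluation map
`T^(Hom(T, N)) → N` has `Ext¹(T, K) = 0`, because every map `T → N` lifts to `T^(Hom(T, N))`
and `Ext¹(T, T^(λ)) = 0`. Then also `Ext¹(T₁, K) = 0`, so every map `R → K` extends along
`R → T₀`; hence `K` is generated by `T₀ ∈ Add(T)`.
-/

namespace Function.Exact

variable {R M N P : Type*} [Ring R] [AddCommGroup M] [AddCommGroup N] [AddCommGroup P]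
  [Module R M] [Module R N] [Module R P] {f : M →ₗ[R] N} {g : N →ₗ[R] P}

theorem exists_desc_of_comp_eq_zero {Y : Type*} [AddCommGroup Y] [Module R Y]
    (h : Function.Exact f g) (hg : Function.Surjective g) {φ : N →ₗ[R] Y} (hφ : φ ∘ₗ f = 0) :
    ∃ ψ : P →ₗ[R] Y, ψ ∘ₗ g = φ :=
  ⟨(LinearMap.range f).liftQ φ (LinearMap.range_le_ker_iff.mpr hφ) ∘ₗ
      (h.linearEquivOfSurjective hg).symm.toLinearMap,
    by ext x; simp⟩

theorem exists_lift_of_comp_eq_zero {Y : Type*} [AddCommGroup Y] [Module R Y]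
    (h : Function.Exact f g) (hf : Function.Injective f) {φ : Y →ₗ[R] N} (hφ : g ∘ₗ φ = 0) :
    ∃ ψ : Y →ₗ[R] M, f ∘ₗ ψ = φ := by
  have hmem : ∀ y, φ y ∈ LinearMap.range f := fun y =>
    (h (φ y)).mp (LinearMap.congr_fun hφ y)
  refine ⟨(LinearEquiv.ofInjective f hf).symm.toLinearMap ∘ₗ
    LinearMap.codRestrict (LinearMap.range f) φ hmem, ?_⟩
  ext y
  simp

end Function.Exact

/-- The unbundled form of `Ext1Zero`, phrased with `Function.Exact`. -/
def Ext1Vanishes (Q K : Type) [AddCommGroup Q] [Module R Q] [AddCommGroup K] [Module R K] :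
    Prop :=
  ∀ (B : Type) [AddCommGroup B] [Module R B] (i : K →ₗ[R] B) (p : B →ₗ[R] Q),
    Function.Injective i → Function.Surjective p → Function.Exact i p →
    ∃ s : Q →ₗ[R] B, p ∘ₗ s = LinearMap.id

namespace Ext1Vanishes

variable {R} {Q K : Type} [AddCommGroup Q] [Module R Q] [AddCommGroup K] [Module R K]

theorem exists_retraction (h : Ext1Vanishes R Q K) {B : Type} [AddCommGroup B] [Module R B]
    {i : K →ₗ[R] B} {p : B →ₗ[R] Q} (hi : Function.Injective i) (hp : Function.Surjective p)
    (hip : Function.Exact i p) : ∃ r : B →ₗ[R] K, r ∘ₗ i = LinearMap.id :=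
  ((hip.split_tfae hi hp).out 0 1).mp (h B i p hi hp hip)

/-- Pull the extension back along `g`; the pullback splits. -/
theorem exists_lift {X B : Type} [AddCommGroup X] [Module R X] [AddCommGroup B] [Module R B]
    (h : Ext1Vanishes R X K) {i : K →ₗ[R] B} {q : B →ₗ[R] Q} (hi : Function.Injective i)
    (hq : Function.Surjective q) (hiq : Function.Exact i q) (g : X →ₗ[R] Q) :
    ∃ σ : X →ₗ[R] B, q ∘ₗ σ = g := by
  let P := LinearMap.ker (g ∘ₗ LinearMap.fst R X B - q ∘ₗ LinearMap.snd R X B)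
  have memP : ∀ v : X × B, v ∈ P ↔ g v.1 = q v.2 := fun v => by
    simp [P, sub_eq_zero]
  let i' : K →ₗ[R] P := LinearMap.codRestrict P (LinearMap.inr R X B ∘ₗ i)
    fun k => (memP _).2 (by simpa using ((hiq (i k)).mpr ⟨k, rfl⟩).symm)
  let fst' : P →ₗ[R] X := LinearMap.fst R X B ∘ₗ P.subtype
  have hi' : Function.Injective i' := fun a b hab =>
    hi (congrArg (fun v : P => (v : X × B).2) hab)
  have hfst' : Function.Surjective fst' := fun x => by
    obtain ⟨b, hb⟩ := hq (g x)
    exact ⟨⟨(x, b), (memP _).2 hb.symm⟩, rfl⟩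
  have hexact : Function.Exact i' fst' := by
    rintro ⟨⟨x, b⟩, hv⟩
    refine ⟨fun hx => ?_, ?_⟩
    · obtain rfl : x = 0 := hx
      obtain ⟨k, rfl⟩ := (hiq b).mp (by simpa using ((memP _).1 hv).symm)
      exact ⟨k, rfl⟩
    · rintro ⟨k, hk⟩
      simp [← hk, fst', i']
  obtain ⟨s, hs⟩ := h P i' fst' hi' hfst' hexact
  refine ⟨LinearMap.snd R X B ∘ₗ P.subtype ∘ₗ s, LinearMap.ext fun x => ?_⟩
  have hx : ((s x : P) : X × B).1 = x := LinearMap.congr_fun hs x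
  simpa [hx] using ((memP _).1 (s x).2).symm

/-- Push the extension out along `e`; the pushout splits. -/
theorem exists_extend {A B : Type} [AddCommGroup A] [Module R A] [AddCommGroup B] [Module R B]
    (h : Ext1Vanishes R Q K) {i : A →ₗ[R] B} {q : B →ₗ[R] Q} (hi : Function.Injective i)
    (hq : Function.Surjective q) (hiq : Function.Exact i q) (e : A →ₗ[R] K) :
    ∃ φ : B →ₗ[R] K, φ ∘ₗ i = e := by
  let W := LinearMap.range (e.prod (-i))
  let jK : K →ₗ[R] (K × B) ⧸ W := W.mkQ ∘ₗ LinearMap.inl R K B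
  let jB : B →ₗ[R] (K × B) ⧸ W := W.mkQ ∘ₗ LinearMap.inr R K B
  have hW : W ≤ LinearMap.ker (LinearMap.coprod 0 q) := by
    rintro _ ⟨a, rfl⟩
    simpa using (hiq (i a)).mpr ⟨a, rfl⟩
  let π : (K × B) ⧸ W →ₗ[R] Q := W.liftQ _ hW
  have hjK : Function.Injective jK := by
    refine (injective_iff_map_eq_zero jK).mpr fun k hk => ?_
    obtain ⟨a, ha⟩ := (Submodule.Quotient.mk_eq_zero W).mp hk
    have hea : e a = k := by simpa using congrArg Prod.fst ha
    have hia : i a = 0 := by simpa using congrArg Prod.snd ha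
    rw [← hea, (injective_iff_map_eq_zero i).mp hi a hia, map_zero]
  have hπ : Function.Surjective π := fun x => by
    obtain ⟨b, rfl⟩ := hq x
    exact ⟨jB b, by simp [π, jB]⟩
  have hexact : Function.Exact jK π := by
    intro y
    obtain ⟨⟨k, b⟩, rfl⟩ := Submodule.Quotient.mk_surjective W y
    refine ⟨fun hy => ?_, ?_⟩
    · obtain ⟨a, rfl⟩ := (hiq b).mp (by simpa [π] using hy)
      refine ⟨k + e a, (Submodule.Quotient.eq W).mpr ⟨a, ?_⟩⟩
      simp
    · rintro ⟨k', hk'⟩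
      rw [← hk']
      simp [π, jK]
  obtain ⟨ρ, hρ⟩ := h.exists_retraction hjK hπ hexact
  refine ⟨ρ ∘ₗ jB, LinearMap.ext fun a => ?_⟩
  have hglue : jB (i a) = jK (e a) :=
    ((Submodule.Quotient.eq W).mpr ⟨a, by simp⟩).symm
  simpa [hglue] using LinearMap.congr_fun hρ (e a)

theorem finsupp (h : Ext1Vanishes R Q K) (ν : Type) : Ext1Vanishes R (ν →₀ Q) K := by
  intro B _ _ i q hi hq hiq
  choose σ hσ using fun m : ν => h.exists_lift hi hq hiq (Finsupp.lsingle m)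
  exact ⟨Finsupp.lsum ℕ σ, Finsupp.lhom_ext fun m t => by
    simpa using LinearMap.congr_fun (hσ m) t⟩

theorem of_retract {Q' : Type} [AddCommGroup Q'] [Module R Q'] (h : Ext1Vanishes R Q K)
    (s : Q' →ₗ[R] Q) (r : Q →ₗ[R] Q') (hrs : r ∘ₗ s = LinearMap.id) : Ext1Vanishes R Q' K := by
  intro B _ _ i q hi hq hiq
  obtain ⟨σ, hσ⟩ := h.exists_lift hi hq hiq r
  exact ⟨σ ∘ₗ s, by rw [← LinearMap.comp_assoc, hσ, hrs]⟩

theorem of_exact {X N : Type} [AddCommGroup X] [Module R X] [AddCommGroup N] [Module R N]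
    (hX : Ext1Vanishes R Q X) {κ : K →ₗ[R] X} {ε : X →ₗ[R] N} (hκ : Function.Injective κ)
    (hκε : Function.Exact κ ε) (hlift : ∀ h : Q →ₗ[R] N, ∃ g : Q →ₗ[R] X, ε ∘ₗ g = h) :
    Ext1Vanishes R Q K := by
  intro B _ _ i q hi hq hiq
  refine ((hiq.split_tfae hi hq).out 0 1).mpr ?_
  obtain ⟨β, hβ⟩ := hX.exists_extend hi hq hiq κ
  obtain ⟨h, hh⟩ := hiq.exists_desc_of_comp_eq_zero hq (φ := ε ∘ₗ β) (by
    rw [LinearMap.comp_assoc, hβ, hκε.linearMap_comp_eq_zero])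
  obtain ⟨g, rfl⟩ := hlift h
  -- `β - g q` still extends `κ` and now lands in `ker ε = K`
  obtain ⟨r, hr⟩ := hκε.exists_lift_of_comp_eq_zero hκ (φ := β - g ∘ₗ q) (by
    rw [LinearMap.comp_sub, ← hh, LinearMap.comp_assoc, sub_self])
  refine ⟨r, LinearMap.ext fun k => hκ ?_⟩
  have hqi : q (i k) = 0 := (hiq (i k)).mpr ⟨k, rfl⟩
  calc κ (r (i k)) = β (i k) - g (q (i k)) := LinearMap.congr_fun hr (i k)
    _ = κ k := by rw [hqi, map_zero, sub_zero, ← LinearMap.comp_apply, hβ]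
    _ = κ (LinearMap.id k) := rfl

end Ext1Vanishes

section Tilting

variable {R}

theorem ext1Vanishes_of_ext1Zero {T M : ModuleCat R} (h : Ext1Zero R T M) :
    Ext1Vanishes R T M := by
  intro B _ _ i p hi hp hip
  obtain ⟨s, hs⟩ := h (ModuleCat.of R B) (ModuleCat.ofHom i) (ModuleCat.ofHom p) hi hp
    (LinearMap.exact_iff.mp hip).symm
  exact ⟨s.hom, congrArg ModuleCat.Hom.hom hs⟩

theorem Ext1Vanishes.of_inAddM {T A : ModuleCat R} {K : Type} [AddCommGroup K] [Module R K]
    (h : Ext1Vanishes R T K) (hA : InAddM R T A) : Ext1Vanishes R A K := by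
  obtain ⟨ν, s, r, hsr⟩ := hA
  exact (h.finsupp ν).of_retract s.hom r.hom (congrArg ModuleCat.Hom.hom hsr)

theorem genM_of_forall_mem_range {T : ModuleCat R} {ν K : Type} [AddCommGroup K] [Module R K]
    (h : ∀ k : K, ∃ φ : (ν →₀ T) →ₗ[R] K, k ∈ LinearMap.range φ) :
    GenM R T (ModuleCat.of R K) := by
  choose φ hφ using h
  let F : (K × ν →₀ T) →ₗ[R] K := Finsupp.lsum ℕ fun km => φ km.1 ∘ₗ Finsupp.lsingle km.2
  refine ⟨K × ν, ModuleCat.ofHom F, fun k => ?_⟩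
  obtain ⟨x, hx⟩ := hφ k
  have hF : F ∘ₗ Finsupp.lmapDomain T R (Prod.mk k) = φ k :=
    Finsupp.lhom_ext fun m t => by simp [F]
  exact ⟨Finsupp.lmapDomain T R (Prod.mk k) x, (LinearMap.congr_fun hF x).trans hx⟩

theorem genM_of_ext1Vanishes {T : ModuleCat R} (hT : IsTiltingM R T) {K : Type}
    [AddCommGroup K] [Module R K] (hK : Ext1Vanishes R T K) : GenM R T (ModuleCat.of R K) := by
  obtain ⟨T₀, T₁, i, p, hi, hp, hrange, ⟨ν, s, r, hsr⟩, hT₁⟩ := hT.2.2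
  have hip : Function.Exact i p := LinearMap.exact_iff.mpr hrange.symm
  refine genM_of_forall_mem_range (ν := ν) fun k => ?_
  obtain ⟨φ, hφ⟩ := (hK.of_inAddM hT₁).exists_extend hi hp hip (LinearMap.toSpanSingleton R K k)
  refine ⟨φ ∘ₗ r.hom, s (i 1), ?_⟩
  have hrs : r (s (i 1)) = i 1 := congrArg (fun f => f.hom (i 1)) hsr
  simpa [hrs] using LinearMap.congr_fun hφ 1

theorem surjective_lsum_of_genM {T N : ModuleCat R} (hN : GenM R T N) :
    Function.Surjective (Finsupp.lsum ℕ fun h : T →ₗ[R] N => h) := by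
  obtain ⟨ι, f, hf⟩ := hN
  intro n
  obtain ⟨x, rfl⟩ := hf n
  have hcomp : (Finsupp.lsum ℕ fun h : T →ₗ[R] N => h) ∘ₗ
      Finsupp.lmapDomain T R (fun m => f.hom ∘ₗ Finsupp.lsingle m) = f.hom :=
    Finsupp.lhom_ext fun m t => by simp
  exact ⟨_, LinearMap.congr_fun hcomp x⟩

theorem ext1Vanishes_ker_lsum {T : ModuleCat R}
    (hT : ∀ ι : Type, Ext1Zero R T (ModuleCat.of R (ι →₀ T))) (N : ModuleCat R) :
    Ext1Vanishes R T (LinearMap.ker (Finsupp.lsum ℕ fun h : T →ₗ[R] N => h)) :=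
  (ext1Vanishes_of_ext1Zero (hT _)).of_exact Subtype.val_injective
    (LinearMap.exact_subtype_ker_map _) fun h => ⟨Finsupp.lsingle h, by ext; simp⟩

theorem presM_of_genM {T N : ModuleCat R} (hT : IsTiltingM R T) (hN : GenM R T N) :
    PresM R T N :=
  ⟨T →ₗ[R] N, ModuleCat.ofHom _, surjective_lsum_of_genM hN,
    genM_of_ext1Vanishes hT (ext1Vanishes_ker_lsum hT.2.1 N)⟩

end Tilting

/-- if `T` is 1-tilting, every `M ∈ Pres(T)` admits a short exact
sequence `0 → K → T₀ → M → 0` with `T₀ ∈ Add T` and `K ∈ Pres(T)`. -/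
theorem stmt15 (T : ModuleCat R) (hT : IsTiltingM R T) :
    ∀ M : ModuleCat R, PresM R T M →
      ∃ (K T₀ : ModuleCat R) (i : K ⟶ T₀) (p : T₀ ⟶ M),
        Function.Injective i ∧ Function.Surjective p ∧
        LinearMap.range i.hom = LinearMap.ker p.hom ∧
        InAddM R T T₀ ∧ PresM R T K := by
  rintro M ⟨ι, f, hf, hker⟩
  exact ⟨ModuleCat.of R (LinearMap.ker f.hom), ModuleCat.of R (ι →₀ T),
    ModuleCat.ofHom (LinearMap.ker f.hom).subtype, f, Subtype.val_injective, hf,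
    Submodule.range_subtype _, ⟨ι, 𝟙 _, 𝟙 _, Category.id_comp _⟩, presM_of_genM hT hker⟩
end

section
/- Let R be a ring and X a class of right R-modules such that X ∩ ^⊥X is closed under arbitrary direct sums and X is closed under cokernels of monomorphisms (if 0 → A → B → C → 0 is exact with A,B ∈ X then C ∈ X). Then X ∩ ^⊥X is closed under direct summands. -/
open CategoryTheory

variable (R : Type) [Ring R]

/-!
The Eilenberg swindle. Split `N = M ⊕ M'` along the idempotent `i ∘ r`. On `D = N^(ℕ)`, the
map that is the identity on every copy of `M'` and moves the `k`-th copy of `M` to the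
`(k+1)`-st is injective, and its cokernel is the `0`-th copy of `M`. As `D ∈ X ∩ ⊥X`, closure
of `X` under cokernels of monomorphisms gives `M ∈ X`. Finally `Ext¹(M, -)` vanishes wherever
`Ext¹(N, -)` does: an extension of `M`, pulled back along `r`, splits over `N`, and composing
the splitting with `i` splits the original extension.
-/

open DirectSum

namespace EilenbergSwindle

variable {R : Type*} [Ring R] {M N : Type*} [AddCommGroup M] [Module R M]
  [AddCommGroup N] [Module R N] (i : M →ₗ[R] N) (r : N →ₗ[R] M)

def map : (⨁ _ : ℕ, N) →ₗ[R] ⨁ _ : ℕ, N :=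
  toModule R ℕ _ fun k =>
    lof R ℕ _ k ∘ₗ (LinearMap.id - i ∘ₗ r) + lof R ℕ _ (k + 1) ∘ₗ (i ∘ₗ r)

def retraction : (⨁ _ : ℕ, N) →ₗ[R] ⨁ _ : ℕ, N :=
  toModule R ℕ _ fun
    | 0 => lof R ℕ _ 0 ∘ₗ (LinearMap.id - i ∘ₗ r)
    | k + 1 =>
      lof R ℕ _ (k + 1) ∘ₗ (LinearMap.id - i ∘ₗ r) + lof R ℕ _ k ∘ₗ (i ∘ₗ r)

def proj : (⨁ _ : ℕ, N) →ₗ[R] M := r ∘ₗ component R ℕ _ 0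

@[simp] lemma map_lof (k : ℕ) (n : N) :
    map i r (lof R ℕ _ k n) = lof R ℕ _ k (n - i (r n)) + lof R ℕ _ (k + 1) (i (r n)) := by
  simp [map, toModule_lof]

@[simp] lemma retraction_lof_zero (n : N) :
    retraction i r (lof R ℕ _ 0 n) = lof R ℕ _ 0 (n - i (r n)) := by
  simp [retraction, toModule_lof]

@[simp] lemma retraction_lof_succ (k : ℕ) (n : N) :
    retraction i r (lof R ℕ _ (k + 1) n) =
      lof R ℕ _ (k + 1) (n - i (r n)) + lof R ℕ _ k (i (r n)) := by
  simp [retraction, toModule_lof]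

@[simp] lemma proj_lof (k : ℕ) (n : N) :
    proj r (lof R ℕ _ k n) = if k = 0 then r n else 0 := by
  rcases k with _ | k <;> simp [proj, component.of]

variable {i r} (hri : Function.LeftInverse r i)
include hri

lemma retraction_comp_map : retraction i r ∘ₗ map i r = LinearMap.id := by
  ext (_ | k) n <;> simp [hri _]

lemma proj_comp_map : proj r ∘ₗ map i r = 0 := by
  ext (_ | k) n <;> simp [hri _]

lemma lof_comp_proj_add_map_comp_retraction :
    lof R ℕ _ 0 ∘ₗ i ∘ₗ proj r + map i r ∘ₗ retraction i r = LinearMap.id := by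
  ext (_ | k) n <;> simp [hri _]

theorem map_injective : Function.Injective (map i r) :=
  Function.LeftInverse.injective (g := retraction i r)
    (LinearMap.congr_fun (retraction_comp_map hri))

theorem proj_surjective : Function.Surjective (proj r) :=
  fun m => ⟨lof R ℕ _ 0 (i m), by simp [hri m]⟩

theorem range_map_eq_ker_proj : LinearMap.range (map i r) = LinearMap.ker (proj r) := by
  refine le_antisymm (LinearMap.range_le_ker_iff.mpr (proj_comp_map hri)) fun x hx =>
    ⟨retraction i r x, ?_⟩
  simpa [LinearMap.mem_ker.mp hx] using
    LinearMap.congr_fun (lof_comp_proj_add_map_comp_retraction hri) x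

end EilenbergSwindle

section Ext1Zero

variable {R}

theorem Ext1Zero.exists_lift_s17 {N X B M : ModuleCat R} (hN : Ext1Zero R N X)
    (j : X ⟶ B) (p : B ⟶ M) (hj : Function.Injective j) (hp : Function.Surjective p)
    (hjp : LinearMap.range j.hom = LinearMap.ker p.hom) (r : N ⟶ M) :
    ∃ t : N ⟶ B, t ≫ p = r := by
  let P : Submodule R (B × N) :=
    LinearMap.ker (p.hom ∘ₗ LinearMap.fst R B N - r.hom ∘ₗ LinearMap.snd R B N)
  have mem_P {x : B × N} : x ∈ P ↔ p x.1 = r x.2 := by simp [P, sub_eq_zero]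
  have hpj (x : X) : p (j x) = 0 :=
    LinearMap.mem_ker.mp (hjp ▸ LinearMap.mem_range_self j.hom x)
  let j' : X →ₗ[R] P :=
    LinearMap.codRestrict P (j.hom.prod 0) fun x => mem_P.mpr (by simp [hpj])
  let π : P →ₗ[R] N := LinearMap.snd R B N ∘ₗ P.subtype
  have hj' : Function.Injective j' := fun x y hxy => hj congr(($hxy).1.1)
  have hπ : Function.Surjective π := fun n =>
    let ⟨b, hb⟩ := hp (r n); ⟨⟨(b, n), mem_P.mpr hb⟩, rfl⟩
  have hj'π : LinearMap.range j' = LinearMap.ker π := by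
    refine le_antisymm (by rintro _ ⟨x, rfl⟩; rfl) ?_
    rintro ⟨⟨b, n⟩, hbn⟩ (rfl : n = 0)
    obtain ⟨x, rfl⟩ : b ∈ LinearMap.range j.hom := hjp ▸ by simpa using mem_P.mp hbn
    exact ⟨x, rfl⟩
  obtain ⟨s, hs⟩ := hN (.of R P) (ModuleCat.ofHom j') (ModuleCat.ofHom π) hj' hπ hj'π
  refine ⟨s ≫ ModuleCat.ofHom (LinearMap.fst R B N ∘ₗ P.subtype), ?_⟩
  ext n
  have hsn : (s n : B × N).2 = n := congr($hs n)
  simpa [hsn] using mem_P.mp (s n).2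

theorem Ext1Zero.of_retract {M N X : ModuleCat R} (i : M ⟶ N) (r : N ⟶ M)
    (hir : i ≫ r = 𝟙 M) (hN : Ext1Zero R N X) : Ext1Zero R M X := by
  intro B j p hj hp hjp
  obtain ⟨t, ht⟩ := hN.exists_lift_s17 j p hj hp hjp r
  exact ⟨i ≫ t, by rw [Category.assoc, ht, hir]⟩

end Ext1Zero

/-- Eilenberg swindle: if `X ∩ ^⊥X` is closed under arbitrary direct
sums and `X` is closed under cokernels of monomorphisms, then `X ∩ ^⊥X` is closed
under direct summands. -/
theorem stmt17 (𝒳 : ModuleCat R → Prop)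
    (hds : ∀ (ι : Type) (f : ι → ModuleCat R),
      (∀ i : ι, 𝒳 (f i) ∧ (∀ X : ModuleCat R, 𝒳 X → Ext1Zero R (f i) X)) →
      (𝒳 (ModuleCat.of R (DirectSum ι (fun i => f i))) ∧
        (∀ X : ModuleCat R, 𝒳 X →
          Ext1Zero R (ModuleCat.of R (DirectSum ι (fun i => f i))) X)))
    (hclo : ∀ (A B C : ModuleCat R) (f : A ⟶ B) (g : B ⟶ C),
      Function.Injective f → Function.Surjective g →
      LinearMap.range f.hom = LinearMap.ker g.hom → 𝒳 A → 𝒳 B → 𝒳 C) :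
    ∀ (M N : ModuleCat R) (i : M ⟶ N) (r : N ⟶ M), i ≫ r = 𝟙 M →
      (𝒳 N ∧ (∀ X : ModuleCat R, 𝒳 X → Ext1Zero R N X)) →
      (𝒳 M ∧ (∀ X : ModuleCat R, 𝒳 X → Ext1Zero R M X)) := by
  intro M N i r hir hN
  have hri : Function.LeftInverse r i := fun m => congr($hir m)
  have hD := (hds ℕ (fun _ => N) fun _ => hN).1
  refine ⟨hclo _ _ M (ModuleCat.ofHom (EilenbergSwindle.map i.hom r.hom))
    (ModuleCat.ofHom (EilenbergSwindle.proj r.hom)) (EilenbergSwindle.map_injective hri)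
    (EilenbergSwindle.proj_surjective hri) (EilenbergSwindle.range_map_eq_ker_proj hri) hD hD, ?_⟩
  exact fun X hX => (hN.2 X hX).of_retract i r hir
end
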